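/- One has Σ B₂(⟨a⟩) = 0, where the sum runs over all pairs (a, b) ∈ (ℤ/p^kℤ)² such that a² − εb² is a unit of ℤ/p^kℤ; equivalently, the Stickelberger element θ has degree 0: deg θ = 0. -/

import Mathlib

/-! Since `ε` is not a square mod `p`, the form `a² − εb²` is a unit mod `p^k` unless `p` divides
both `a` and `b`. The sum over units is therefore the sum over all pairs minus the sum over pairs
with `p ∣ a` and `p ∣ b`, and both equal `1/6` by the distribution relation
`Σ_{i<m} B₂(i/m) = 1/(6m)`: the first is `p^k · 1/(6p^k)`, the second `p^(k-1) · 1/(6p^(k-1))`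
because `⟨pc⟩ = c/p^(k-1)`. The degree of `θ` is `p^k/4` times this sum. -/

open scoped Classical

/-- `H = (ℤ/nℤ)ˣ/{±1}`. -/
abbrev Hgrp (n : ℕ) : Type := (ZMod n)ˣ ⧸ Subgroup.zpowers (-1 : (ZMod n)ˣ)

/-- The rational group algebra `ℚ[H]`. -/
abbrev QH (n : ℕ) : Type := MonoidAlgebra ℚ (Hgrp n)

/-- `deg : ℚ[H] → ℚ`, the ℚ-algebra map sending every element of `H` to `1`
(so `deg` of an element is the sum of its coefficients). -/
noncomputable def deg (n : ℕ) : QH n →ₐ[ℚ] ℚ := MonoidAlgebra.lift ℚ ℚ (Hgrp n) 1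

/-- `R ⊆ ℚ[H]`: the elements all of whose coefficients are integers, as an additive subgroup. -/
def Rgrp (n : ℕ) : AddSubgroup (QH n) where
  carrier := {x | ∀ h : Hgrp n, ∃ m : ℤ, x.coeff h = (m : ℚ)}
  zero_mem' := fun h => ⟨0, by simp⟩
  add_mem' := by
    intro x y hx hy h
    obtain ⟨a, ha⟩ := hx h
    obtain ⟨b, hb⟩ := hy h
    refine ⟨a + b, ?_⟩
    show (x + y).coeff h = ((a + b : ℤ) : ℚ)
    rw [MonoidAlgebra.coeff_add, Finsupp.add_apply, ha, hb]
    push_cast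
    ring
  neg_mem' := by
    intro x hx h
    obtain ⟨a, ha⟩ := hx h
    refine ⟨-a, ?_⟩
    show (-x).coeff h = ((-a : ℤ) : ℚ)
    rw [MonoidAlgebra.coeff_neg, Finsupp.neg_apply, ha]
    push_cast
    ring

/-- `R_m`: the elements of `R` whose degree is divisible by `m`. -/
noncomputable def RgrpDeg (n : ℕ) (m : ℕ) : AddSubgroup (QH n) where
  carrier := {x | x ∈ Rgrp n ∧ ∃ c : ℤ, deg n x = (m : ℚ) * c}
  zero_mem' := ⟨(Rgrp n).zero_mem, 0, by simp⟩
  add_mem' := by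
    rintro x y ⟨hx, cx, hcx⟩ ⟨hy, cy, hcy⟩
    refine ⟨(Rgrp n).add_mem hx hy, cx + cy, ?_⟩
    rw [map_add, hcx, hcy]
    push_cast
    ring
  neg_mem' := by
    rintro x ⟨hx, cx, hcx⟩
    refine ⟨(Rgrp n).neg_mem hx, -cx, ?_⟩
    rw [map_neg, hcx]
    push_cast
    ring

/-- `R₀`: the degree-zero elements of `R`. -/
noncomputable def R0grp (n : ℕ) : AddSubgroup (QH n) where
  carrier := {x | x ∈ Rgrp n ∧ deg n x = 0}
  zero_mem' := ⟨(Rgrp n).zero_mem, map_zero _⟩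
  add_mem' := by
    rintro x y ⟨hx, dx⟩ ⟨hy, dy⟩
    exact ⟨(Rgrp n).add_mem hx hy, by rw [map_add, dx, dy, add_zero]⟩
  neg_mem' := by
    rintro x ⟨hx, dx⟩
    exact ⟨(Rgrp n).neg_mem hx, by rw [map_neg, dx, neg_zero]⟩

/-- `N = Σ_{h ∈ H} h ∈ ℚ[H]`. -/
noncomputable def Nelt (n : ℕ) [NeZero n] : QH n :=
  letI : Fintype (Hgrp n) := Fintype.ofFinite _
  ∑ h : Hgrp n, MonoidAlgebra.single h (1 : ℚ)

/-- The second Bernoulli polynomial `B₂(t) = t² − t + 1/6`. -/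
def B2 (t : ℚ) : ℚ := t ^ 2 - t + 1 / 6

/-- `⟨a⟩ = ã/n ∈ [0,1)` for `a ∈ ℤ/nℤ` with representative `ã ∈ {0, …, n−1}`. -/
def fracPart (n : ℕ) (a : ZMod n) : ℚ := (a.val : ℚ) / n

/-- The class in `H` of a unit of `ℤ/nℤ`. -/
noncomputable def cls (n : ℕ) (u : (ZMod n)ˣ) : Hgrp n := QuotientGroup.mk u

/-- The Stickelberger element
`θ = (n/4)·Σ_{(a,b) ∈ (ℤ/nℤ)², a²−εb² invertible} B₂(⟨a⟩)·[a²−εb²]⁻¹ ∈ ℚ[H]`. -/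
noncomputable def theta (n : ℕ) (ε : ℤ) [NeZero n] : QH n :=
  ((n : ℚ) / 4) • ∑ v : ZMod n × ZMod n, ∑ u : (ZMod n)ˣ,
    if (u : ZMod n) = v.1 ^ 2 - (ε : ZMod n) * v.2 ^ 2 then
      MonoidAlgebra.single ((cls n u)⁻¹) (B2 (fracPart n v.1)) else 0

/-- `θ' = θ − ((p+1)p^(2k−1)/12)·N`. -/
noncomputable def theta' (p k : ℕ) (ε : ℤ) [NeZero (p ^ k)] : QH (p ^ k) :=
  theta (p ^ k) ε - ((((p : ℚ) + 1) * (p : ℚ) ^ (2 * k - 1)) / 12) • Nelt (p ^ k)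

/-- `d = 12/gcd(12, p+1)`. -/
def dConst (p : ℕ) : ℕ := 12 / Nat.gcd 12 (p + 1)

open Finset

lemma sum_range_B2_div {m : ℕ} (hm : m ≠ 0) :
    ∑ i ∈ range m, B2 ((i : ℚ) / m) = 1 / (6 * m) := by
  have sum_id : ∀ N : ℕ, ∑ i ∈ range N, (i : ℚ) = N * (N - 1) / 2 := by
    intro N; induction N with
    | zero => simp
    | succ N ih => rw [sum_range_succ, ih]; push_cast; ring
  have sum_sq : ∀ N : ℕ, ∑ i ∈ range N, (i : ℚ) ^ 2 = N * (N - 1) * (2 * N - 1) / 6 := by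
    intro N; induction N with
    | zero => simp
    | succ N ih => rw [sum_range_succ, ih]; push_cast; ring
  have hm' : (m : ℚ) ≠ 0 := Nat.cast_ne_zero.mpr hm
  simp only [B2, div_pow, sum_add_distrib, sum_sub_distrib, ← sum_div, sum_sq, sum_id,
    sum_const, card_range, nsmul_eq_mul]
  field_simp
  ring

lemma ZMod.sum_val_eq_sum_range {M : Type*} [AddCommMonoid M] (n : ℕ) [NeZero n] (f : ℕ → M) :
    ∑ a : ZMod n, f a.val = ∑ i ∈ range n, f i := by
  obtain ⟨m, rfl⟩ := Nat.exists_eq_succ_of_ne_zero (NeZero.ne n)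
  exact Fin.sum_univ_eq_sum_range f _

lemma sum_range_mul_filter_dvd {M : Type*} [AddCommMonoid M] {d : ℕ} (hd : 0 < d) (m : ℕ)
    (f : ℕ → M) : ∑ i ∈ range (d * m) with d ∣ i, f i = ∑ c ∈ range m, f (d * c) := by
  symm
  refine sum_nbij (d * ·) (fun c hc => ?_) (fun _ _ _ _ h => Nat.eq_of_mul_eq_mul_left hd h)
    (fun i hi => ?_) (fun _ _ => rfl)
  · simp only [mem_filter, mem_range] at hc ⊢
    exact ⟨Nat.mul_lt_mul_of_pos_left hc hd, dvd_mul_right d c⟩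
  · simp only [coe_filter, mem_range, Set.mem_ofPred_eq] at hi
    obtain ⟨hlt, c, rfl⟩ := hi
    exact ⟨c, by simpa using Nat.lt_of_mul_lt_mul_left hlt, rfl⟩

lemma sum_filter_dvd_val_eq_sum_range {M : Type*} [AddCommMonoid M] {d m n : ℕ} [NeZero n]
    (hd : 0 < d) (hn : d * m = n) (f : ℕ → M) :
    ∑ a : ZMod n with d ∣ a.val, f a.val = ∑ c ∈ range m, f (d * c) := by
  rw [sum_filter, ZMod.sum_val_eq_sum_range n (fun i => if d ∣ i then f i else 0), ← sum_filter,
    ← hn, sum_range_mul_filter_dvd hd]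

lemma card_filter_dvd_val {d m n : ℕ} [NeZero n] (hd : 0 < d) (hn : d * m = n) :
    #{a : ZMod n | d ∣ a.val} = m := by
  rw [card_eq_sum_ones, sum_filter_dvd_val_eq_sum_range hd hn (fun _ => 1), sum_const,
    card_range, smul_eq_mul, mul_one]

lemma sum_B2_fracPart_filter_dvd {d m n : ℕ} [NeZero n] (hd : 0 < d) (hm : m ≠ 0)
    (hn : d * m = n) : ∑ a : ZMod n with d ∣ a.val, B2 (fracPart n a) = 1 / (6 * m) := by
  have hd' : (d : ℚ) ≠ 0 := by positivity
  rw [← sum_range_B2_div hm]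
  refine (sum_filter_dvd_val_eq_sum_range hd hn (fun i => B2 ((i : ℚ) / n))).trans ?_
  refine sum_congr rfl fun c _ => ?_
  rw [← hn]; push_cast
  rw [mul_div_mul_left _ _ hd']

lemma sum_B2_fracPart (n : ℕ) [NeZero n] : ∑ a : ZMod n, B2 (fracPart n a) = 1 / (6 * n) :=
  (ZMod.sum_val_eq_sum_range n fun i => B2 ((i : ℚ) / n)).trans (sum_range_B2_div (NeZero.ne n))

lemma sq_sub_mul_sq_eq_zero_iff {F : Type*} [Field F] {ε : F} (hε : ¬IsSquare ε) {x y : F} :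
    x ^ 2 - ε * y ^ 2 = 0 ↔ x = 0 ∧ y = 0 := by
  refine ⟨fun h => ?_, fun ⟨hx, hy⟩ => by simp [hx, hy]⟩
  by_cases hy : y = 0
  · exact ⟨by simpa [hy] using h, hy⟩
  · exact absurd ⟨x / y, by field_simp; linear_combination -h⟩ hε

lemma ZMod.castHom_eq_zero_iff_dvd_val {n p : ℕ} [NeZero n] (h : p ∣ n) (x : ZMod n) :
    ZMod.castHom h (ZMod p) x = 0 ↔ p ∣ x.val := by
  rw [← ZMod.natCast_zmod_val x, map_natCast, ZMod.natCast_eq_zero_iff, ZMod.natCast_zmod_val]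

lemma ZMod.isUnit_iff_not_dvd_val {p k : ℕ} (hp : p.Prime) (hk : 0 < k) (x : ZMod (p ^ k)) :
    IsUnit x ↔ ¬p ∣ x.val := by
  have : NeZero (p ^ k) := ⟨pow_ne_zero k hp.ne_zero⟩
  rw [← ZMod.isUnit_natCast_iff_not_dvd_pow hp hk, ZMod.natCast_zmod_val]

lemma isUnit_sq_sub_mul_sq_iff {p k : ℕ} [Fact p.Prime] (hk : 0 < k) {ε : ℤ}
    (hε : ¬IsSquare (ε : ZMod p)) (a b : ZMod (p ^ k)) :
    IsUnit (a ^ 2 - ε * b ^ 2) ↔ ¬(p ∣ a.val ∧ p ∣ b.val) := by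
  have hdvd : p ∣ p ^ k := dvd_pow_self p hk.ne'
  let φ := ZMod.castHom hdvd (ZMod p)
  have hφ : φ (a ^ 2 - ε * b ^ 2) = φ a ^ 2 - ε * φ b ^ 2 := by
    simp only [map_sub, map_mul, map_pow, map_intCast]
  rw [ZMod.isUnit_iff_not_dvd_val Fact.out hk, ← ZMod.castHom_eq_zero_iff_dvd_val hdvd, hφ,
    sq_sub_mul_sq_eq_zero_iff hε, ZMod.castHom_eq_zero_iff_dvd_val hdvd,
    ZMod.castHom_eq_zero_iff_dvd_val hdvd]

theorem sum_B2_fracPart_filter_isUnit {p k : ℕ} [Fact p.Prime] (hk : 0 < k) {ε : ℤ}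
    (hε : ¬IsSquare (ε : ZMod p)) :
    ∑ v : ZMod (p ^ k) × ZMod (p ^ k) with IsUnit (v.1 ^ 2 - (ε : ZMod (p ^ k)) * v.2 ^ 2),
      B2 (fracPart (p ^ k) v.1) = 0 := by
  have hp : p.Prime := Fact.out
  have hpk : p * p ^ (k - 1) = p ^ k := by rw [← pow_succ', Nat.sub_add_cancel hk]
  have sum_all : ∑ v : ZMod (p ^ k) × ZMod (p ^ k), B2 (fracPart (p ^ k) v.1) = 1 / 6 := by
    simp only [Fintype.sum_prod_type, sum_const, card_univ, ZMod.card, nsmul_eq_mul, ← mul_sum,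
      sum_B2_fracPart]
    have hn : ((p ^ k : ℕ) : ℚ) ≠ 0 := Nat.cast_ne_zero.mpr (NeZero.ne _)
    field_simp
  have sum_nonunits : ∑ v : ZMod (p ^ k) × ZMod (p ^ k)
      with ¬IsUnit (v.1 ^ 2 - (ε : ZMod (p ^ k)) * v.2 ^ 2), B2 (fracPart (p ^ k) v.1) = 1 / 6 := by
    simp only [isUnit_sq_sub_mul_sq_iff hk hε, not_not]
    rw [← univ_product_univ, filter_product (s := univ) (t := univ)
      (fun a : ZMod (p ^ k) => p ∣ a.val) (fun b : ZMod (p ^ k) => p ∣ b.val), sum_product]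
    simp only [sum_const, card_filter_dvd_val hp.pos hpk, nsmul_eq_mul, ← mul_sum,
      sum_B2_fracPart_filter_dvd hp.pos (pow_ne_zero _ hp.ne_zero) hpk]
    have hm : ((p ^ (k - 1) : ℕ) : ℚ) ≠ 0 := Nat.cast_ne_zero.mpr (NeZero.ne _)
    field_simp
  linarith [sum_filter_add_sum_filter_not univ (fun v : ZMod (p ^ k) × ZMod (p ^ k) =>
    IsUnit (v.1 ^ 2 - (ε : ZMod (p ^ k)) * v.2 ^ 2)) (fun v => B2 (fracPart (p ^ k) v.1))]

lemma deg_single (n : ℕ) (h : Hgrp n) (c : ℚ) : deg n (MonoidAlgebra.single h c) = c := by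
  simp [deg, MonoidAlgebra.lift_single]

lemma Units.sum_ite_val_eq {M R : Type*} [Monoid M] [DecidableEq M] [Fintype Mˣ]
    [AddCommMonoid R] (x : M) (c : R) :
    ∑ u : Mˣ, (if (u : M) = x then c else 0) = if IsUnit x then c else 0 := by
  split_ifs with hx
  · obtain ⟨u, rfl⟩ := hx
    simp [Units.val_inj]
  · exact sum_eq_zero fun u _ => if_neg fun (hu : (u : M) = x) => hx (hu ▸ u.isUnit)

lemma deg_theta (n : ℕ) (ε : ℤ) [NeZero n] :
    deg n (theta n ε) = n / 4 * ∑ v : ZMod n × ZMod n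
      with IsUnit (v.1 ^ 2 - (ε : ZMod n) * v.2 ^ 2), B2 (fracPart n v.1) := by
  simp only [theta, map_smul, map_sum, apply_ite (deg n), deg_single, map_zero,
    Units.sum_ite_val_eq, smul_eq_mul, sum_filter]

theorem sum_B2_eq_zero_and_deg_theta_general (p k : ℕ) [Fact p.Prime] (hk : 1 ≤ k)
    (ε : ℤ) (hε : ¬ IsSquare (ε : ZMod p)) :
    (∑ v ∈ Finset.univ.filter (fun v : ZMod (p ^ k) × ZMod (p ^ k) =>
        IsUnit (v.1 ^ 2 - (ε : ZMod (p ^ k)) * v.2 ^ 2)), B2 (fracPart (p ^ k) v.1)) = 0 ∧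
    deg (p ^ k) (theta (p ^ k) ε) = 0 := by
  have h := sum_B2_fracPart_filter_isUnit hk hε
  exact ⟨h, by rw [deg_theta, h, mul_zero]⟩

/-- `Σ B₂(⟨a⟩) = 0`, the sum running over pairs `(a,b) ∈ (ℤ/p^kℤ)²` with `a² − εb²` a unit;
equivalently, the Stickelberger element `θ` has degree `0`. -/
theorem sum_B2_eq_zero_and_deg_theta (p k : ℕ) [Fact p.Prime] (hp5 : 5 ≤ p) (hk : 1 ≤ k)
    (ε : ℤ) (hε : ¬ IsSquare (ε : ZMod p)) :
    (∑ v ∈ Finset.univ.filter (fun v : ZMod (p ^ k) × ZMod (p ^ k) =>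
        IsUnit (v.1 ^ 2 - (ε : ZMod (p ^ k)) * v.2 ^ 2)), B2 (fracPart (p ^ k) v.1)) = 0 ∧
    deg (p ^ k) (theta (p ^ k) ε) = 0 :=
  sum_B2_eq_zero_and_deg_theta_general p k hk ε hε
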